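/- Let H be a real inner product space, let M be a closed subspace, and suppose y ∈ H decomposes as y = y_∥ + y_⊥ with y_∥ ∈ M and y_⊥ ∈ M^⊥. If a constraint set I ⊆ H has the property that membership of y in I depends only on the inner products ⟨η, y⟩ for η ranging over a family of elements of M, then the minimizer of ‖·‖² over I, if it exists, lies in M: indeed ‖y‖² = ‖y_∥‖² + ‖y_⊥‖² ≥ ‖y_∥‖² and y_∥ ∈ I whenever y ∈ I. -/
import Mathlib


open scoped RealInnerProductSpace

/-- Abstract representer theorem: if membership in the constraint set `I` only depends on
inner products with a family of representers lying in the closed subspace `M`, then for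
`y = y_∥ + y_⊥` with `y_∥ ∈ M`, `y_⊥ ∈ M^⊥`, we have the Pythagorean identity, the parallel
component is again feasible, and any minimizer of the norm over `I` lies in `M`. -/
theorem representer_theorem {H : Type*} [NormedAddCommGroup H] [InnerProductSpace ℝ H]
    {ι : Type*} (M : Submodule ℝ H) (hM : IsClosed (M : Set H)) (I : Set H)
    (η : ι → H) (hη : ∀ i, η i ∈ M)
    (hI : ∀ u v : H, (∀ i, ⟪η i, u⟫ = ⟪η i, v⟫) → (u ∈ I ↔ v ∈ I))
    (y ypar yperp : H) (hdec : y = ypar + yperp) (hpar : ypar ∈ M) (hperp : yperp ∈ Mᗮ) :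
    ‖y‖ ^ 2 = ‖ypar‖ ^ 2 + ‖yperp‖ ^ 2 ∧ ‖ypar‖ ^ 2 ≤ ‖y‖ ^ 2 ∧
      (y ∈ I → ypar ∈ I) ∧
      ((y ∈ I ∧ ∀ z ∈ I, ‖y‖ ≤ ‖z‖) → y ∈ M) := by
  have horth : ⟪ypar, yperp⟫ = 0 := hperp ypar hpar
  have hpyth : ‖y‖ ^ 2 = ‖ypar‖ ^ 2 + ‖yperp‖ ^ 2 := by
    rw [hdec, norm_add_sq_real, horth]; ring
  have hle : ‖ypar‖ ^ 2 ≤ ‖y‖ ^ 2 := by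
    rw [hpyth]; nlinarith [sq_nonneg ‖yperp‖]
  have hfeas : y ∈ I → ypar ∈ I := by
    intro hy
    exact (hI y ypar (fun i => by
      rw [hdec, inner_add_right, hperp (η i) (hη i), add_zero])).mp hy
  refine ⟨hpyth, hle, hfeas, ?_⟩
  rintro ⟨hyI, hmin⟩
  have h2 : ‖y‖ ≤ ‖ypar‖ := hmin ypar (hfeas hyI)
  have h3 : ‖yperp‖ ^ 2 ≤ 0 := by nlinarith [norm_nonneg y, norm_nonneg ypar]
  have h4 : yperp = 0 := by
    have := norm_eq_zero.mp (le_antisymm (by nlinarith [sq_nonneg ‖yperp‖] : ‖yperp‖ ≤ 0) (norm_nonneg _))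
    exact this
  rw [hdec, h4, add_zero]; exact hpar
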